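/- Let E be an exact category with enough projectives, P a projective cover of E having weak simple products, and X an object of P. The following are equivalent: (1) for every object J of P and every subobject a of J × X, the subobject w_X(a) is a value of a right adjoint to (−) × X : Sub(J) → Sub(J × X), i.e. for all b ∈ Sub(J), b × X ≤ a iff b ≤ w_X(a); (2) the functor (−) × X : E → E preserves projective objects; (3) X is internally projective. -/

import Mathlib

/-!
A weak simple product `W → J` of the span `J ← Y → X` induced by a `P`-cover `Y ↠ A ↪ J ⨯ X`
carries a genuine arrow `W ⨯ X → Y` over `J`: the comparison `V → W ⨯ X` out of the weak product
is a regular epimorphism, and `V → Y`, being determined by projections, descends along it.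
Pulling back `W ↠ w_X(a)` along `b ≤ w_X(a)` therefore always gives `b ⨯ X ≤ a`. Conversely, if
`X` is internally projective, `b ⨯ X ≤ a` lifts along `Y ↠ A` after a cover of `b`; this is a
competing diagram for the weak simple product, hence maps into `W`, and `b ≤ w_X(a)`.
For the top subobject of `J ⨯ X` the adjunction makes `W → J` a regular epimorphism with a lift
`W ⨯ X → Y` of `W ⨯ X ↠ J ⨯ X` along the cover `Y ↠ J ⨯ X`, which is internal projectivity.
Finally, a projective `A` splits the cover `U ↠ A` provided by internal projectivity, so `A ⨯ X`
is projective; and projectivity of `J ⨯ X` for `J ∈ P` gives the lifts directly.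
-/

open CategoryTheory Limits

namespace ExComp

universe v u

variable {E : Type u} [Category.{v} E]

/-- A regular epimorphism, as a property of a morphism. -/
def RegEpi {A B : E} (f : A ⟶ B) : Prop := Nonempty (RegularEpi f)

/-- An object is (regular) projective if its covariant hom functor sends regular
epimorphisms to surjections. -/
def RegProjective (X : E) : Prop :=
  ∀ ⦃A B : E⦄ (e : A ⟶ B), RegEpi e → ∀ f : X ⟶ B, ∃ g : X ⟶ A, g ≫ e = f

/-- `E` has enough projectives: every object admits a regular epimorphism from a
projective object. -/
def EnoughRegProjectives (E : Type u) [Category.{v} E] : Prop :=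
  ∀ A : E, ∃ (X : E) (p : X ⟶ A), RegProjective X ∧ RegEpi p

/-- An internal equivalence relation: a jointly monic, reflexive, symmetric and
transitive pair of parallel arrows. -/
structure IsEquivRelPair {R X : E} (r₁ r₂ : R ⟶ X) : Prop where
  jointlyMono : ∀ ⦃T : E⦄ (h k : T ⟶ R), h ≫ r₁ = k ≫ r₁ → h ≫ r₂ = k ≫ r₂ → h = k
  refl : ∃ d : X ⟶ R, d ≫ r₁ = 𝟙 X ∧ d ≫ r₂ = 𝟙 X
  symm : ∃ s : R ⟶ R, s ≫ r₁ = r₂ ∧ s ≫ r₂ = r₁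
  trans : ∀ ⦃T : E⦄ (p q : T ⟶ R), p ≫ r₂ = q ≫ r₁ →
    ∃ t : T ⟶ R, t ≫ r₁ = p ≫ r₁ ∧ t ≫ r₂ = q ≫ r₂

/-- An exact category: a finitely complete category where every morphism factors as a
regular epi followed by a mono, regular epis are stable under pullback, and every
internal equivalence relation is effective (it is the kernel pair of the coequaliser
it admits). -/
structure IsExact (E : Type u) [Category.{v} E] [HasFiniteLimits E] : Prop where
  factor : ∀ ⦃A B : E⦄ (f : A ⟶ B), ∃ (I : E) (e : A ⟶ I) (m : I ⟶ B),
    RegEpi e ∧ Mono m ∧ e ≫ m = f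
  stable : ∀ ⦃A B C : E⦄ (f : A ⟶ B) (g : C ⟶ B), RegEpi f → RegEpi (pullback.snd f g)
  effective : ∀ ⦃R X : E⦄ (r₁ r₂ : R ⟶ X), IsEquivRelPair r₁ r₂ →
    ∃ (Q : E) (q : X ⟶ Q) (w : r₁ ≫ q = r₂ ≫ q),
      Nonempty (IsColimit (Cofork.ofπ q w)) ∧ IsPullback r₁ r₂ q q

/-- A projective cover of `E`: a (full sub)collection of objects, each projective,
such that every object of `E` admits a regular epimorphism from one of them. -/
def IsProjectiveCover (P : Set E) : Prop :=
  (∀ X ∈ P, RegProjective X) ∧ ∀ A : E, ∃ X ∈ P, ∃ p : X ⟶ A, RegEpi p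

section FinLim
variable [HasFiniteLimits E]

/-- `X` is internally projective: every arrow `T ⨯ X ⟶ B` lifts along a regular epi
`A ↠ B` after passing to a regular epi `U ↠ T`. -/
def InternallyProjective (X : E) : Prop :=
  ∀ ⦃T A B : E⦄ (e : A ⟶ B), RegEpi e → ∀ f : T ⨯ X ⟶ B,
    ∃ (U : E) (u : U ⟶ T) (g : U ⨯ X ⟶ A), RegEpi u ∧ g ≫ e = prod.map u (𝟙 X) ≫ f

/-- Cartesian closure, as a property: for every object `X` the functor `(−) ⨯ X` has a
right adjoint. -/
def CartesianClosedP (E : Type u) [Category.{v} E] [HasFiniteLimits E] : Prop :=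
  ∀ X : E, (prod.functor.flip.obj X).IsLeftAdjoint

/-- Local cartesian closure, as a property: every slice is cartesian closed. -/
def LocallyCartesianClosedP (E : Type u) [Category.{v} E] [HasFiniteLimits E] : Prop :=
  ∀ (I : E) (F : Over I), ((prod.functor (C := Over I)).flip.obj F).IsLeftAdjoint

end FinLim

/-! ## Weak products and weak simple products -/

/-- A weak product in `P` of `X` and `Y`: a span through which every span in `P`
factors (not necessarily uniquely). -/
structure IsWeakProduct (P : Set E) {X Y V : E} (p : V ⟶ X) (q : V ⟶ Y) : Prop where
  mem : V ∈ P
  lift : ∀ ⦃V' : E⦄, V' ∈ P → ∀ (p' : V' ⟶ X) (q' : V' ⟶ Y),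
    ∃ h : V' ⟶ V, h ≫ p = p' ∧ h ≫ q = q'

/-- An arrow out of a weak product is determined by projections if it coequalises
every pair of arrows (from an object of `P`) coequalised by both projections. -/
def DeterminedByProjections (P : Set E) {V X Y Z : E} (p : V ⟶ X) (q : V ⟶ Y)
    (f : V ⟶ Z) : Prop :=
  ∀ ⦃V' : E⦄, V' ∈ P → ∀ (h k : V' ⟶ V), h ≫ p = k ≫ p → h ≫ q = k ≫ q → h ≫ f = k ≫ f

/-- A candidate diagram for a weak simple product of a span `J ←f Y →g X`. -/
structure WSPCone (P : Set E) {J Y X : E} (f : Y ⟶ J) (g : Y ⟶ X)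
    (W V : E) (w : W ⟶ J) (p : V ⟶ W) (q : V ⟶ X) (e : V ⟶ Y) : Prop where
  memW : W ∈ P
  wp : IsWeakProduct P p q
  det : DeterminedByProjections P p q e
  comm₁ : p ≫ w = e ≫ f
  comm₂ : q = e ≫ g

/-- A weak simple product: a weakly terminal candidate diagram. -/
structure IsWeakSimpleProduct (P : Set E) {J Y X : E} (f : Y ⟶ J) (g : Y ⟶ X)
    (W V : E) (w : W ⟶ J) (p : V ⟶ W) (q : V ⟶ X) (e : V ⟶ Y) : Prop where
  cone : WSPCone P f g W V w p q e
  lift : ∀ ⦃W' V' : E⦄ (w' : W' ⟶ J) (p' : V' ⟶ W') (q' : V' ⟶ X) (e' : V' ⟶ Y),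
    WSPCone P f g W' V' w' p' q' e' →
    ∃ (α : W' ⟶ W) (β : V' ⟶ V),
      α ≫ w = w' ∧ β ≫ p = p' ≫ α ∧ β ≫ q = q' ∧ β ≫ e = e'

/-- `P` has weak simple products. -/
def HasWeakSimpleProducts (P : Set E) : Prop :=
  ∀ ⦃J Y X : E⦄, J ∈ P → Y ∈ P → X ∈ P → ∀ (f : Y ⟶ J) (g : Y ⟶ X),
    ∃ (W V : E) (w : W ⟶ J) (p : V ⟶ W) (q : V ⟶ X) (e : V ⟶ Y),
      IsWeakSimpleProduct P f g W V w p q e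

/-! ## Pseudo simple products -/

/-- A candidate diagram for a pseudo simple product (no determinacy requirement). -/
structure PSPCone (P : Set E) {J Y X : E} (f : Y ⟶ J) (g : Y ⟶ X)
    (W V : E) (w : W ⟶ J) (p : V ⟶ W) (q : V ⟶ X) (e : V ⟶ Y) : Prop where
  memW : W ∈ P
  wp : IsWeakProduct P p q
  comm₁ : p ≫ w = e ≫ f
  comm₂ : q = e ≫ g

/-- A pseudo simple product: a weakly terminal candidate diagram. -/
structure IsPseudoSimpleProduct (P : Set E) {J Y X : E} (f : Y ⟶ J) (g : Y ⟶ X)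
    (W V : E) (w : W ⟶ J) (p : V ⟶ W) (q : V ⟶ X) (e : V ⟶ Y) : Prop where
  cone : PSPCone P f g W V w p q e
  lift : ∀ ⦃W' V' : E⦄ (w' : W' ⟶ J) (p' : V' ⟶ W') (q' : V' ⟶ X) (e' : V' ⟶ Y),
    PSPCone P f g W' V' w' p' q' e' →
    ∃ (α : W' ⟶ W) (β : V' ⟶ V),
      α ≫ w = w' ∧ β ≫ p = p' ≫ α ∧ β ≫ q = q' ∧ β ≫ e = e'

/-- `P` has pseudo simple products. -/
def HasPseudoSimpleProducts (P : Set E) : Prop :=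
  ∀ ⦃J Y X : E⦄, J ∈ P → Y ∈ P → X ∈ P → ∀ (f : Y ⟶ J) (g : Y ⟶ X),
    ∃ (W V : E) (w : W ⟶ J) (p : V ⟶ W) (q : V ⟶ X) (e : V ⟶ Y),
      IsPseudoSimpleProduct P f g W V w p q e

/-! ## Weak exponentials -/

/-- A candidate diagram for a weak exponential of `X` and `Y`. -/
structure WExpCone (P : Set E) {X Y : E} (W V : E) (p : V ⟶ W) (q : V ⟶ X)
    (e : V ⟶ Y) : Prop where
  memW : W ∈ P
  wp : IsWeakProduct P p q
  det : DeterminedByProjections P p q e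

/-- A weak exponential of `X` and `Y` in `P`. -/
structure IsWeakExponential (P : Set E) {X Y : E} (W V : E) (p : V ⟶ W) (q : V ⟶ X)
    (e : V ⟶ Y) : Prop where
  cone : WExpCone P W V p q e
  lift : ∀ ⦃W' V' : E⦄ (p' : V' ⟶ W') (q' : V' ⟶ X) (e' : V' ⟶ Y),
    WExpCone P W' V' p' q' e' →
    ∃ (α : W' ⟶ W) (β : V' ⟶ V), β ≫ p = p' ≫ α ∧ β ≫ q = q' ∧ β ≫ e = e'

/-- `P` has weak exponentials. -/
def HasWeakExponentials (P : Set E) : Prop :=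
  ∀ ⦃X Y : E⦄, X ∈ P → Y ∈ P →
    ∃ (W V : E) (p : V ⟶ W) (q : V ⟶ X) (e : V ⟶ Y), IsWeakExponential P W V p q e

/-- A quasi exponential of `X` and `B`: the weak universal property of an exponential
restricted to projective sources. -/
def IsQuasiExponential [HasFiniteLimits E] (P : Set E) (X : E) {B : E} (W : E)
    (e : W ⨯ X ⟶ B) : Prop :=
  ∀ ⦃Z : E⦄, Z ∈ P → ∀ f : Z ⨯ X ⟶ B, ∃ g : Z ⟶ W, prod.map g (𝟙 X) ≫ e = f

section FinLim2
variable [HasFiniteLimits E]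

/-! ## Pseudo equivalence relations, equalities and generalised weak (simple) products -/

/-- A pseudo equivalence relation: a pair of parallel arrows whose image in `E` is an
equivalence relation. -/
def IsPseudoEquivRel {Y1 Y0 : E} (y₁ y₂ : Y1 ⟶ Y0) : Prop :=
  ∃ (R : E) (e : Y1 ⟶ R) (m : R ⟶ Y0 ⨯ Y0), RegEpi e ∧ Mono m ∧
    e ≫ m = prod.lift y₁ y₂ ∧ IsEquivRelPair (m ≫ prod.fst) (m ≫ prod.snd)

/-- An equality for a weak limit, relative to the comparison arrow `c : V0 ⟶ L` into
the actual limit: a pseudo equivalence relation `v₁, v₂ : V1 ⇉ V0` in `P` such that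
`c` is a coequaliser of `v₁, v₂` and `V1` regularly covers the kernel pair of `c`. -/
structure IsEqualityFor (P : Set E) {V1 V0 L : E} (c : V0 ⟶ L) (v₁ v₂ : V1 ⟶ V0) :
    Prop where
  mem : V1 ∈ P
  per : IsPseudoEquivRel v₁ v₂
  w : v₁ ≫ c = v₂ ≫ c
  coeq : Nonempty (IsColimit (Cofork.ofπ c w))
  cover : RegEpi (pullback.lift v₁ v₂ w)

/-- An arrow `e : V ⟶ Z0` out of a weak product with projections `p, q` preserves
projections with respect to a pseudo equivalence relation `z₁, z₂ : Z1 ⇉ Z0` if for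
any equality `v₁, v₂ : V1 ⇉ V` for the weak product there is `t : V1 ⟶ Z1` with
`t ≫ zᵢ = vᵢ ≫ e`. -/
def PreservesProjWP (P : Set E) {V X Y Z1 Z0 : E} (p : V ⟶ X) (q : V ⟶ Y)
    (z₁ z₂ : Z1 ⟶ Z0) (e : V ⟶ Z0) : Prop :=
  ∀ ⦃V1 : E⦄ (v₁ v₂ : V1 ⟶ V), IsEqualityFor P (prod.lift p q) v₁ v₂ →
    ∃ t : V1 ⟶ Z1, t ≫ z₁ = v₁ ≫ e ∧ t ≫ z₂ = v₂ ≫ e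

/-- A candidate diagram for a generalised weak simple product of `f` and `g` with
respect to the pseudo equivalence relation `y₁, y₂`. -/
structure GWSPCone (P : Set E) {Y1 Y0 J X : E} (y₁ y₂ : Y1 ⟶ Y0) (f : Y0 ⟶ J)
    (g : Y0 ⟶ X) (W V : E) (w : W ⟶ J) (p : V ⟶ W) (q : V ⟶ X) (e : V ⟶ Y0) :
    Prop where
  memW : W ∈ P
  wp : IsWeakProduct P p q
  pres : PreservesProjWP P p q y₁ y₂ e
  comm₁ : p ≫ w = e ≫ f
  comm₂ : q = e ≫ g

/-- A generalised weak simple product: a weakly terminal candidate diagram. -/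
structure IsGWSP (P : Set E) {Y1 Y0 J X : E} (y₁ y₂ : Y1 ⟶ Y0) (f : Y0 ⟶ J)
    (g : Y0 ⟶ X) (W V : E) (w : W ⟶ J) (p : V ⟶ W) (q : V ⟶ X) (e : V ⟶ Y0) :
    Prop where
  cone : GWSPCone P y₁ y₂ f g W V w p q e
  lift : ∀ ⦃W' V' : E⦄ (w' : W' ⟶ J) (p' : V' ⟶ W') (q' : V' ⟶ X) (e' : V' ⟶ Y0),
    GWSPCone P y₁ y₂ f g W' V' w' p' q' e' →
    ∃ (α : W' ⟶ W) (β : V' ⟶ V),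
      α ≫ w = w' ∧ β ≫ p = p' ≫ α ∧ β ≫ q = q' ∧ β ≫ e = e'

/-- `P` has generalised weak simple products. -/
def HasGWSP (P : Set E) : Prop :=
  ∀ ⦃Y1 Y0 J X : E⦄, Y1 ∈ P → Y0 ∈ P → J ∈ P → X ∈ P →
    ∀ (y₁ y₂ : Y1 ⟶ Y0), IsPseudoEquivRel y₁ y₂ →
    ∀ (f : Y0 ⟶ J) (g : Y0 ⟶ X), y₁ ≫ f = y₂ ≫ f → y₁ ≫ g = y₂ ≫ g →
    ∃ (W V : E) (w : W ⟶ J) (p : V ⟶ W) (q : V ⟶ X) (e : V ⟶ Y0),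
      IsGWSP P y₁ y₂ f g W V w p q e

/-- A candidate diagram for a generalised weak exponential of `X` and `y₁, y₂`. -/
structure GWExpCone (P : Set E) {X Y1 Y0 : E} (y₁ y₂ : Y1 ⟶ Y0)
    (W V : E) (p : V ⟶ W) (q : V ⟶ X) (e : V ⟶ Y0) : Prop where
  memW : W ∈ P
  wp : IsWeakProduct P p q
  pres : PreservesProjWP P p q y₁ y₂ e

/-- A generalised weak exponential of `X` and a pseudo equivalence relation. -/
structure IsGWExp (P : Set E) {X Y1 Y0 : E} (y₁ y₂ : Y1 ⟶ Y0)
    (W V : E) (p : V ⟶ W) (q : V ⟶ X) (e : V ⟶ Y0) : Prop where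
  cone : GWExpCone P y₁ y₂ W V p q e
  lift : ∀ ⦃W' V' : E⦄ (p' : V' ⟶ W') (q' : V' ⟶ X) (e' : V' ⟶ Y0),
    GWExpCone P y₁ y₂ W' V' p' q' e' →
    ∃ (α : W' ⟶ W) (β : V' ⟶ V), β ≫ p = p' ≫ α ∧ β ≫ q = q' ∧ β ≫ e = e'

/-! ## Weak pullbacks and generalised weak dependent products -/

/-- A weak pullback in `P` of the cospan `X →f J ←w W`. -/
structure IsWeakPullback (P : Set E) {X J W V : E} (f : X ⟶ J) (w : W ⟶ J)
    (a : V ⟶ X) (b : V ⟶ W) : Prop where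
  mem : V ∈ P
  comm : a ≫ f = b ≫ w
  lift : ∀ ⦃V' : E⦄, V' ∈ P → ∀ (a' : V' ⟶ X) (b' : V' ⟶ W), a' ≫ f = b' ≫ w →
    ∃ h : V' ⟶ V, h ≫ a = a' ∧ h ≫ b = b'

/-- Preservation of projections for an arrow out of a weak pullback. -/
def PreservesProjWPB (P : Set E) {V X J W Z1 Z0 : E} (f : X ⟶ J) (w : W ⟶ J)
    (a : V ⟶ X) (b : V ⟶ W) (h : a ≫ f = b ≫ w) (z₁ z₂ : Z1 ⟶ Z0) (e : V ⟶ Z0) :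
    Prop :=
  ∀ ⦃V1 : E⦄ (v₁ v₂ : V1 ⟶ V), IsEqualityFor P (pullback.lift a b h) v₁ v₂ →
    ∃ t : V1 ⟶ Z1, t ≫ z₁ = v₁ ≫ e ∧ t ≫ z₂ = v₂ ≫ e

/-- A candidate diagram for a generalised weak dependent product of `g : Y0 ⟶ X`
along `f : X ⟶ J` with respect to `y₁, y₂`. -/
structure GWDPCone (P : Set E) {Y1 Y0 X J : E} (y₁ y₂ : Y1 ⟶ Y0) (g : Y0 ⟶ X)
    (f : X ⟶ J) (W V : E) (w : W ⟶ J) (a : V ⟶ X) (b : V ⟶ W) (e : V ⟶ Y0) :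
    Prop where
  memW : W ∈ P
  comm : a ≫ f = b ≫ w
  wpb : IsWeakPullback P f w a b
  overX : e ≫ g = a
  pres : PreservesProjWPB P f w a b comm y₁ y₂ e

/-- A generalised weak dependent product: a weakly terminal candidate diagram. -/
structure IsGWDP (P : Set E) {Y1 Y0 X J : E} (y₁ y₂ : Y1 ⟶ Y0) (g : Y0 ⟶ X)
    (f : X ⟶ J) (W V : E) (w : W ⟶ J) (a : V ⟶ X) (b : V ⟶ W) (e : V ⟶ Y0) :
    Prop where
  cone : GWDPCone P y₁ y₂ g f W V w a b e
  lift : ∀ ⦃W' V' : E⦄ (w' : W' ⟶ J) (a' : V' ⟶ X) (b' : V' ⟶ W') (e' : V' ⟶ Y0),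
    GWDPCone P y₁ y₂ g f W' V' w' a' b' e' →
    ∃ (α : W' ⟶ W) (β : V' ⟶ V),
      α ≫ w = w' ∧ β ≫ a = a' ∧ β ≫ b = b' ≫ α ∧ β ≫ e = e'

/-- `P` has generalised weak dependent products (i.e. `P` is weakly locally cartesian
closed). -/
def HasGWDP (P : Set E) : Prop :=
  ∀ ⦃Y1 Y0 X J : E⦄, Y1 ∈ P → Y0 ∈ P → X ∈ P → J ∈ P →
    ∀ (y₁ y₂ : Y1 ⟶ Y0), IsPseudoEquivRel y₁ y₂ →
    ∀ (g : Y0 ⟶ X) (f : X ⟶ J), y₁ ≫ g = y₂ ≫ g →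
    ∃ (W V : E) (w : W ⟶ J) (a : V ⟶ X) (b : V ⟶ W) (e : V ⟶ Y0),
      IsGWDP P y₁ y₂ g f W V w a b e

/-! ## The functor `w_X` on subobjects induced by weak simple products -/

/-- The adjunction property of the weak-simple-product operation `w_X` on subobjects:
for every subobject `a : A ↪ J ⨯ X`, every `P`-cover `Y ↠ A`, every weak simple
product `W → J` of the induced span and every image factorisation `W ↠ I ↪ J` of it,
the subobject `I ↪ J` is a value at `a` of a right adjoint to
`(−) ⨯ X : Sub(J) → Sub(J ⨯ X)`. -/
def WAdj (P : Set E) (J X : E) : Prop :=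
  ∀ ⦃A : E⦄ (a : A ⟶ J ⨯ X), Mono a →
  ∀ ⦃Y : E⦄, Y ∈ P → ∀ (c : Y ⟶ A), RegEpi c →
  ∀ ⦃W V : E⦄ (w : W ⟶ J) (p : V ⟶ W) (q : V ⟶ X) (e : V ⟶ Y),
    IsWeakSimpleProduct P (c ≫ a ≫ prod.fst) (c ≫ a ≫ prod.snd) W V w p q e →
  ∀ ⦃I : E⦄ (ew : W ⟶ I) (m : I ⟶ J), RegEpi ew → Mono m → ew ≫ m = w →
  ∀ ⦃B : E⦄ (b : B ⟶ J), Mono b →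
    ((∃ t : B ⨯ X ⟶ A, t ≫ a = prod.map b (𝟙 X)) ↔ ∃ s : B ⟶ I, s ≫ m = b)

/-! ## Weak dependent products (à la Carboni–Rosolini) -/

/-- `P` has weak dependent products: for `f : X ⟶ J` and `g : Y ⟶ X` in `P` there are
`w : W ⟶ J` in `P` and a surjection `Hom_{P/J}(h, w) → Hom_{P/X}(f*(h), g)` natural
in `h ∈ P/J`. -/
def HasWeakDependentProducts (P : Set E) : Prop :=
  ∀ ⦃X J Y : E⦄, X ∈ P → J ∈ P → Y ∈ P → ∀ (f : X ⟶ J) (g : Y ⟶ X),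
    ∃ (W : E) (_ : W ∈ P) (w : W ⟶ J)
      (ε : ∀ ⦃T : E⦄, T ∈ P → ∀ (h : T ⟶ J) (k : T ⟶ W), k ≫ w = h →
        (pullback h f ⟶ Y)),
      (∀ ⦃T : E⦄ (hT : T ∈ P) (h : T ⟶ J) (k : T ⟶ W) (hk : k ≫ w = h),
         ε hT h k hk ≫ g = pullback.snd h f) ∧
      (∀ ⦃T : E⦄ (hT : T ∈ P) (h : T ⟶ J) (d : pullback h f ⟶ Y),
         d ≫ g = pullback.snd h f → ∃ (k : T ⟶ W) (hk : k ≫ w = h), ε hT h k hk = d) ∧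
      (∀ ⦃T' T : E⦄ (hT' : T' ∈ P) (hT : T ∈ P) (u : T' ⟶ T) (h : T ⟶ J) (k : T ⟶ W)
         (hk : k ≫ w = h),
         ε hT' (u ≫ h) (u ≫ k) (by rw [Category.assoc, hk]) =
           pullback.map (u ≫ h) f h f u (𝟙 X) (𝟙 J) (by simp) (by simp) ≫ ε hT h k hk)

end FinLim2

section RegularEpis

theorem RegEpi.strongEpi {A B : E} {f : A ⟶ B} (hf : RegEpi f) : StrongEpi f :=
  haveI : IsRegularEpi f := ⟨hf⟩
  inferInstance

theorem RegEpi.epi {A B : E} {f : A ⟶ B} (hf : RegEpi f) : Epi f :=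
  hf.strongEpi.epi

theorem exists_lift_of_regEpi_of_mono {C D I K : E} {r : C ⟶ D} (hr : RegEpi r) {m : I ⟶ K}
    [Mono m] {ψ : D ⟶ K} {l : C ⟶ I} (hl : l ≫ m = r ≫ ψ) : ∃ s : D ⟶ I, s ≫ m = ψ :=
  haveI := hr.strongEpi
  ⟨(CommSq.mk hl).lift, (CommSq.mk hl).fac_right⟩

variable [HasFiniteLimits E]

theorem regEpi_of_strongEpi (hE : IsExact E) {A B : E} (f : A ⟶ B) [StrongEpi f] :
    RegEpi f := by
  obtain ⟨I, e, m, he, hm, rfl⟩ := hE.factor f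
  have := strongEpi_of_strongEpi e m
  have := isIso_of_mono_of_strongEpi m
  exact ⟨RegularEpi.ofArrowIso (f := e) (Arrow.isoMk (Iso.refl _) (asIso m)) he.some⟩

theorem RegEpi.comp (hE : IsExact E) {A B C : E} {f : A ⟶ B} {g : B ⟶ C} (hf : RegEpi f)
    (hg : RegEpi g) : RegEpi (f ≫ g) :=
  haveI := hf.strongEpi
  haveI := hg.strongEpi
  regEpi_of_strongEpi hE _

theorem RegEpi.of_comp (hE : IsExact E) {A B C : E} {f : A ⟶ B} {g : B ⟶ C}
    (h : RegEpi (f ≫ g)) : RegEpi g :=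
  haveI := h.strongEpi
  haveI := strongEpi_of_strongEpi f g
  regEpi_of_strongEpi hE g

theorem RegEpi.prod_map (hE : IsExact E) {U T : E} {u : U ⟶ T} (hu : RegEpi u) (X : E) :
    RegEpi (prod.map u (𝟙 X)) := by
  have hpb : prod.map u (𝟙 X) =
      (pullbackProdFstIsoProd u X).inv ≫ pullback.snd u (prod.fst : T ⨯ X ⟶ T) := by
    ext <;> simp
  rw [hpb]
  exact RegEpi.comp hE ⟨RegularEpi.ofIso (pullbackProdFstIsoProd u X).symm⟩
    (hE.stable u prod.fst hu)

end RegularEpis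

section WeakSimpleProducts

variable [HasFiniteLimits E] {P : Set E}

theorem isWeakProduct_iff (hE : IsExact E) (hP : IsProjectiveCover P) {V W X : E}
    (p : V ⟶ W) (q : V ⟶ X) : IsWeakProduct P p q ↔ V ∈ P ∧ RegEpi (prod.lift p q) := by
  refine ⟨fun hwp => ⟨hwp.mem, ?_⟩, fun ⟨hV, hr⟩ => ⟨hV, fun V' hV' p' q' => ?_⟩⟩
  · obtain ⟨Z, hZ, z, hz⟩ := hP.2 (W ⨯ X)
    obtain ⟨h, hp, hq⟩ := hwp.lift hZ (z ≫ prod.fst) (z ≫ prod.snd)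
    refine RegEpi.of_comp hE (f := h) ?_
    convert hz
    ext <;> simp [hp, hq, prod.lift_fst, prod.lift_snd]
  · obtain ⟨h, hh⟩ := hP.1 V' hV' _ hr (prod.lift p' q')
    exact ⟨h, by simpa [prod.lift_fst] using hh =≫ prod.fst,
      by simpa [prod.lift_snd] using hh =≫ prod.snd⟩

theorem DeterminedByProjections.exists_desc (hP : IsProjectiveCover P) {V W X Y : E}
    {p : V ⟶ W} {q : V ⟶ X} {e : V ⟶ Y} (hdet : DeterminedByProjections P p q e)
    (hr : RegEpi (prod.lift p q)) : ∃ ē : W ⨯ X ⟶ Y, prod.lift p q ≫ ē = e := by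
  have := RegularEpi.effectiveEpi hr.some
  refine ⟨EffectiveEpi.desc _ e fun {Z} g₁ g₂ hg => ?_, EffectiveEpi.fac _ _ _⟩
  obtain ⟨Z', hZ', z, hz⟩ := hP.2 Z
  have := hz.epi
  rw [← cancel_epi z]
  simpa using hdet hZ' (z ≫ g₁) (z ≫ g₂) (by simpa [prod.lift_fst] using z ≫= hg =≫ prod.fst)
    (by simpa [prod.lift_snd] using z ≫= hg =≫ prod.snd)

variable {J Y X W V : E} {f : Y ⟶ J} {g : Y ⟶ X}

theorem WSPCone.exists_desc (hE : IsExact E) (hP : IsProjectiveCover P) {w : W ⟶ J}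
    {p : V ⟶ W} {q : V ⟶ X} {e : V ⟶ Y} (hcone : WSPCone P f g W V w p q e) :
    ∃ ē : W ⨯ X ⟶ Y, ē ≫ f = prod.fst ≫ w ∧ ē ≫ g = prod.snd := by
  have hr := ((isWeakProduct_iff hE hP p q).1 hcone.wp).2
  obtain ⟨ē, hē⟩ := hcone.det.exists_desc hP hr
  have := hr.epi
  refine ⟨ē, ?_, ?_⟩ <;> rw [← cancel_epi (prod.lift p q), reassoc_of% hē]
  · simp [hcone.comm₁, prod.lift_fst_assoc]
  · simp [hcone.comm₂, prod.lift_snd]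

theorem WSPCone.of_desc (hE : IsExact E) (hP : IsProjectiveCover P) (hW : W ∈ P) (hV : V ∈ P)
    {w : W ⟶ J} {cv : V ⟶ W ⨯ X} (hcv : RegEpi cv) {ē : W ⨯ X ⟶ Y}
    (h₁ : ē ≫ f = prod.fst ≫ w) (h₂ : ē ≫ g = prod.snd) :
    WSPCone P f g W V w (cv ≫ prod.fst) (cv ≫ prod.snd) (cv ≫ ē) where
  memW := hW
  wp := (isWeakProduct_iff hE hP _ _).2
    ⟨hV, by rwa [← prod.comp_lift, prod.lift_fst_snd, Category.comp_id]⟩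
  det _ _ h k hp hq := by
    have : h ≫ cv = k ≫ cv := prod.hom_ext (by simpa using hp) (by simpa using hq)
    simp only [reassoc_of% this]
  comm₁ := by simp [h₁]
  comm₂ := by simp [h₂]

theorem prod_map_factors_of_factors_image (hE : IsExact E) (hP : IsProjectiveCover P)
    {A : E} {a : A ⟶ J ⨯ X} [Mono a] {c : Y ⟶ A} {w : W ⟶ J} {p : V ⟶ W} {q : V ⟶ X}
    {e : V ⟶ Y} (hcone : WSPCone P (c ≫ a ≫ prod.fst) (c ≫ a ≫ prod.snd) W V w p q e)
    {I : E} {ew : W ⟶ I} {m : I ⟶ J} (hew : RegEpi ew) (hewm : ew ≫ m = w)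
    {B : E} {b : B ⟶ J} {s : B ⟶ I} (hs : s ≫ m = b) :
    ∃ t : B ⨯ X ⟶ A, t ≫ a = prod.map b (𝟙 X) := by
  obtain ⟨ē, h₁, h₂⟩ := hcone.exists_desc hE hP
  have hk : pullback.fst ew s ≫ w = pullback.snd ew s ≫ b := by
    rw [← hewm, ← hs, pullback.condition_assoc]
  refine exists_lift_of_regEpi_of_mono ((hE.stable ew s hew).prod_map hE X)
    (l := prod.map (pullback.fst ew s) (𝟙 X) ≫ ē ≫ c) ?_
  ext
  · simp [h₁, hk]
  · simp [h₂]

theorem InternallyProjective.factors_image_of_prod_map_factors (hE : IsExact E)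
    (hP : IsProjectiveCover P) (hX : InternallyProjective X) {A : E} {a : A ⟶ J ⨯ X}
    {c : Y ⟶ A} (hc : RegEpi c) {w : W ⟶ J} {p : V ⟶ W} {q : V ⟶ X} {e : V ⟶ Y}
    (hwsp : IsWeakSimpleProduct P (c ≫ a ≫ prod.fst) (c ≫ a ≫ prod.snd) W V w p q e)
    {I : E} {ew : W ⟶ I} {m : I ⟶ J} [Mono m] (hewm : ew ≫ m = w)
    {B : E} {b : B ⟶ J} {t : B ⨯ X ⟶ A} (ht : t ≫ a = prod.map b (𝟙 X)) :
    ∃ s : B ⟶ I, s ≫ m = b := by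
  obtain ⟨U, u, g, hu, hg⟩ := hX c hc t
  obtain ⟨U', hU', d, hd⟩ := hP.2 U
  obtain ⟨V', hV', cv, hcv⟩ := hP.2 (U' ⨯ X)
  have hcone := WSPCone.of_desc hE hP hU' hV' hcv (f := c ≫ a ≫ prod.fst)
    (g := c ≫ a ≫ prod.snd) (w := d ≫ u ≫ b) (ē := prod.map d (𝟙 X) ≫ g)
    (by simp [reassoc_of% hg, reassoc_of% ht]) (by simp [reassoc_of% hg, reassoc_of% ht])
  obtain ⟨α, -, hα, -⟩ := hwsp.lift _ _ _ _ hcone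
  exact exists_lift_of_regEpi_of_mono (hd.comp hE hu) (l := α ≫ ew)
    (by rw [Category.assoc, hewm, hα, Category.assoc])

theorem InternallyProjective.wAdj (hE : IsExact E) (hP : IsProjectiveCover P)
    (hX : InternallyProjective X) (J : E) : WAdj P J X := by
  intro A a ha Y _ c hc W V w p q e hwsp I ew m hew hm hewm B b _
  exact ⟨fun ⟨_, ht⟩ => hX.factors_image_of_prod_map_factors hE hP hc hwsp hewm ht,
    fun ⟨_, hs⟩ => prod_map_factors_of_factors_image hE hP hwsp.cone hew hewm hs⟩

end WeakSimpleProducts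

section InternalProjectivity

variable [HasFiniteLimits E] {P : Set E} {X : E}

theorem internallyProjective_of_covers (hE : IsExact E) (hP : IsProjectiveCover P)
    (h : ∀ J ∈ P, ∀ Y ∈ P, ∀ c : Y ⟶ J ⨯ X, RegEpi c →
      ∃ (U : E) (u : U ⟶ J) (g : U ⨯ X ⟶ Y), RegEpi u ∧ g ≫ c = prod.map u (𝟙 X)) :
    InternallyProjective X := by
  intro T A B e he f
  obtain ⟨J, hJ, j, hj⟩ := hP.2 T
  let f' := prod.map j (𝟙 X) ≫ f
  obtain ⟨Y, hY, y, hy⟩ := hP.2 (pullback e f')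
  obtain ⟨U, u, g, hu, hg⟩ := h J hJ Y hY (y ≫ pullback.snd e f')
    (hy.comp hE (hE.stable e f' he))
  refine ⟨U, u ≫ j, g ≫ y ≫ pullback.fst e f', hu.comp hE hj, ?_⟩
  simp [pullback.condition, reassoc_of% hg, f']

theorem internallyProjective_of_wAdj (hE : IsExact E) (hP : IsProjectiveCover P)
    (hwsp : HasWeakSimpleProducts P) (hX : X ∈ P) (hw : ∀ J ∈ P, WAdj P J X) :
    InternallyProjective X := by
  refine internallyProjective_of_covers hE hP fun J hJ Y hY c hc => ?_
  obtain ⟨W, V, w, p, q, e, hWSP⟩ :=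
    hwsp hJ hY hX (c ≫ 𝟙 (J ⨯ X) ≫ prod.fst) (c ≫ 𝟙 (J ⨯ X) ≫ prod.snd)
  obtain ⟨I, ew, m, hew, hm, hewm⟩ := hE.factor w
  -- `J ⨯ X` lies below the top subobject `𝟙 (J ⨯ X)`, so the image `m` of `w` is all of `J`.
  obtain ⟨s, hs⟩ := (hw J hJ (𝟙 _) inferInstance hY c hc w p q e hWSP ew m hew hm hewm
    (𝟙 J) inferInstance).1 ⟨𝟙 _, by simp⟩
  have : IsIso m := ⟨s, by rw [← cancel_mono m, Category.assoc, hs]; simp, hs⟩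
  obtain ⟨ē, h₁, h₂⟩ := hWSP.cone.exists_desc hE hP
  refine ⟨W, w, ē, hewm ▸ hew.comp hE ⟨RegularEpi.ofIso (asIso m)⟩, ?_⟩
  ext
  · simpa using h₁
  · simpa using h₂

theorem InternallyProjective.regProjective_prod (hX : InternallyProjective X) {A : E}
    (hA : RegProjective A) : RegProjective (A ⨯ X) := by
  intro C D e he f
  obtain ⟨U, u, g, hu, hg⟩ := hX e he f
  obtain ⟨s, hs⟩ := hA u hu (𝟙 A)
  exact ⟨prod.map s (𝟙 X) ≫ g, by simp [hg, hs]⟩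

theorem internallyProjective_of_regProjective_prod (hP : IsProjectiveCover P)
    (h : ∀ A ∈ P, RegProjective (A ⨯ X)) : InternallyProjective X := by
  intro T A B e he f
  obtain ⟨J, hJ, j, hj⟩ := hP.2 T
  obtain ⟨g, hg⟩ := h J hJ e he (prod.map j (𝟙 X) ≫ f)
  exact ⟨J, j, g, hj, hg⟩

end InternalProjectivity

/-- For `X ∈ P`, with `P` having weak simple products, the following are
equivalent: (1) `w_X` is a right adjoint to `(−) ⨯ X` on subobjects for every `J ∈ P`;
(2) `(−) ⨯ X` preserves projective objects; (3) `X` is internally projective. -/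
theorem stmt4 {E : Type u} [Category.{v} E] [HasFiniteLimits E]
    (hE : IsExact E) (P : Set E) (hP : IsProjectiveCover P)
    (hwsp : HasWeakSimpleProducts P) (X : E) (hX : X ∈ P) :
    ((∀ J ∈ P, WAdj P J X) ↔ InternallyProjective X) ∧
    ((∀ A : E, RegProjective A → RegProjective (A ⨯ X)) ↔ InternallyProjective X) :=
  ⟨⟨internallyProjective_of_wAdj hE hP hwsp hX, fun hip J _ => hip.wAdj hE hP J⟩,
    ⟨fun h => internallyProjective_of_regProjective_prod hP fun A hA => h A (hP.1 A hA),
      fun hip _ hA => hip.regProjective_prod hA⟩⟩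

end ExComp
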